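/- arXiv:1012.5836 — 6 statements merged into one kernel-verified Lean document; each statement's English description precedes it below -/
import Mathlib

section
/- Fix p ∈ (0,ς_*)^J and suppose the Leibniz rule holds for the Mixed Logit choice probabilities at p, i.e. (∂P_j/∂p_k)(p) = ∫ (∂P_j^L/∂p_k)(θ,p) dμ(θ) for all j,k. Then the Jacobian of P at p is (DP)(p) = Λ(p) − Γ(p), where Λ(p) is the diagonal matrix with entries λ_j(p) = ∫_{L(p_j)} (Dw_j)(θ,p_j) P_j^L(θ,p) dμ(θ) and Γ(p) is the J×J matrix with entries γ_{j,k}(p) = ∫_{L(p_j)∩L(p_k)} P_j^L(θ,p) P_k^L(θ,p) (Dw_k)(θ,p_k) dμ(θ); that is, (∂P_j/∂p_k)(p) = δ_{j,k} λ_j(p) − γ_{j,k}(p) for all j,k, where δ_{j,k} is the Kronecker delta. -/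
/-!
Fix `j, k` and a consumer type `θ`. Whether or not `θ ∈ L(p_k)`, the weight `q ↦ e_k(θ, q)` has the
one-sided derivative `Dw_k(θ, p_k) · e_k(θ, p_k)` on `[p_k, ∞)` at `p_k`: inside `L(p_k)` it is
`exp (w_k + v_k)` near `p_k`, outside it vanishes on `[p_k, ∞)`. The quotient rule for the logit
share then gives the one-sided derivative `δ_{jk} Dw_k P_j^L − P_j^L P_k^L Dw_k` of
`q ↦ P_j^L(θ, p[k ↦ q])`, and a one-sided derivative on `[p_k, ∞)` determines the two-sided one
granted by the Leibniz rule. Integrating over `θ` gives `δ_{jk} λ_j − γ_{jk}`, because the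
integrands of `λ_j` and `γ_{jk}` vanish outside `L(p_j)` and `L(p_j) ∩ L(p_k)`.
-/

open MeasureTheory Function Set

/-- `P_j^L` is `logitShare (exp ϑ) (fun i => exp u_i) j`. -/
noncomputable def logitShare {ι : Type*} [Fintype ι] (c : ℝ) (s : ι → ℝ) (j : ι) : ℝ :=
  s j / (c + ∑ i, s i)

theorem hasDerivWithinAt_Ici_of_eq_ite {E f : ℝ → ℝ} {b : EReal} {x d : ℝ}
    (hE : ∀ q, E q = if (q : EReal) < b then Real.exp (f q) else 0)
    (hf : (x : EReal) < b → HasDerivAt f d x) :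
    HasDerivWithinAt E (d * E x) (Ici x) x := by
  by_cases hx : (x : EReal) < b
  · have hloc : E =ᶠ[nhds x] fun q => Real.exp (f q) := by
      filter_upwards [(isOpen_Iio.preimage continuous_coe_real_ereal).mem_nhds hx] with q hq
      rw [hE, if_pos (show (q : EReal) < b from hq)]
    rw [hE x, if_pos hx, mul_comm]
    exact ((hf hx).exp.congr_of_eventuallyEq hloc).hasDerivWithinAt
  · have hzero : ∀ q ∈ Ici x, E q = 0 := fun q hq => by
      rw [hE, if_neg fun h => hx ((EReal.coe_le_coe_iff.2 hq).trans_lt h)]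
    rw [hzero x self_mem_Ici, mul_zero]
    exact (hasDerivWithinAt_const x _ 0).congr hzero (hzero x self_mem_Ici)

section LogitShare

variable {ι : Type*} [DecidableEq ι] {E : ι → ℝ → ℝ} {x : ι → ℝ} {k : ι}
  {s : Set ℝ} {d : ℝ}

theorem HasDerivWithinAt.apply_update (hE : HasDerivWithinAt (E k) d s (x k)) (i : ι) :
    HasDerivWithinAt (fun q => E i (update x k q i)) (if i = k then d else 0) s (x k) := by
  by_cases hik : i = k
  · subst hik
    simpa using hE
  · simpa [hik] using hasDerivWithinAt_const (x k) s (E i (x i))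

theorem HasDerivWithinAt.logitShare_update [Fintype ι] {D : ℝ}
    (hE : HasDerivWithinAt (E k) (D * E k (x k)) s (x k)) (c : ℝ) (j : ι)
    (hS : c + ∑ i, E i (x i) ≠ 0) :
    HasDerivWithinAt (fun q => logitShare c (fun i => E i (update x k q i)) j)
      ((if j = k then D * logitShare c (fun i => E i (x i)) j else 0) -
        logitShare c (fun i => E i (x i)) j * logitShare c (fun i => E i (x i)) k * D) s (x k) := by
  have hsum : HasDerivWithinAt (fun q => c + ∑ i, E i (update x k q i)) (D * E k (x k)) s (x k) := by
    have := HasDerivWithinAt.fun_sum (u := Finset.univ) fun i _ => hE.apply_update i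
    simpa only [Finset.sum_ite_eq', Finset.mem_univ, if_true] using this.const_add c
  have hdiv := (hE.apply_update j).div hsum (by simpa using hS)
  rw [update_eq_self] at hdiv
  refine hdiv.congr_deriv ?_
  simp only [logitShare]
  split_ifs with hjk
  · subst hjk
    field_simp
  · field_simp
    ring

theorem hasDerivWithinAt_Ici_logitShare_update [Fintype ι] {f : ι → ℝ → ℝ} {b : EReal}
    (hE : ∀ i q, E i q = if (q : EReal) < b then Real.exp (f i q) else 0) (c : ℝ) (j : ι)
    (hf : (x k : EReal) < b → HasDerivAt (f k) d (x k)) :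
    HasDerivWithinAt (fun q => logitShare (Real.exp c) (fun i => E i (update x k q i)) j)
      ((if j = k then d * logitShare (Real.exp c) (fun i => E i (x i)) j else 0) -
        logitShare (Real.exp c) (fun i => E i (x i)) j *
          logitShare (Real.exp c) (fun i => E i (x i)) k * d) (Ici (x k)) (x k) := by
  have hE_nonneg : ∀ i q, 0 ≤ E i q := fun i q => by
    rw [hE]
    split_ifs <;> positivity
  refine (hasDerivWithinAt_Ici_of_eq_ite (hE k) hf).logitShare_update _ j ?_
  exact (add_pos_of_pos_of_nonneg (Real.exp_pos c)
    (Finset.sum_nonneg fun i _ => hE_nonneg i (x i))).ne'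

end LogitShare

theorem stmt1_general {J : ℕ} {T : Type*} [MeasurableSpace T]
    (μ : Measure T)
    (w Dw : Fin J → T → ℝ → ℝ) (v : Fin J → T → ℝ)
    (ϑ : T → ℝ) (ς : T → EReal)
    (e : Fin J → T → ℝ → ℝ)
    (he : ∀ j θ q, e j θ q =
      if (q : EReal) < ς θ then Real.exp (w j θ q + v j θ) else 0)
    (PL : Fin J → T → (Fin J → ℝ) → ℝ)
    (hPL : ∀ j θ r, PL j θ r = e j θ (r j) / (Real.exp (ϑ θ) + ∑ i, e i θ (r i)))
    (P : Fin J → (Fin J → ℝ) → ℝ)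
    (p : Fin J → ℝ)
    (hw : ∀ j, ∀ᵐ θ ∂μ, (p j : EReal) < ς θ →
      HasDerivAt (w j θ) (Dw j θ (p j)) (p j))
    (lam : Fin J → ℝ)
    (hlam : ∀ j, lam j =
      ∫ θ in {θ | (p j : EReal) < ς θ}, Dw j θ (p j) * PL j θ p ∂μ)
    (hlamInt : ∀ j, IntegrableOn (fun θ => Dw j θ (p j) * PL j θ p)
      {θ | (p j : EReal) < ς θ} μ)
    (gam : Fin J → Fin J → ℝ)
    (hgam : ∀ j k, gam j k =
      ∫ θ in {θ | (p j : EReal) < ς θ ∧ (p k : EReal) < ς θ},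
        PL j θ p * PL k θ p * Dw k θ (p k) ∂μ)
    (hgamInt : ∀ j k, IntegrableOn (fun θ => PL j θ p * PL k θ p * Dw k θ (p k))
      {θ | (p j : EReal) < ς θ ∧ (p k : EReal) < ς θ} μ)
    (DPL : Fin J → Fin J → T → ℝ)
    -- the Leibniz rule : pointwise derivatives exist a.e. and may be passed
    -- through the integral defining the Mixed Logit choice probabilities
    (hLeib : ∀ j k,
      (∀ᵐ θ ∂μ, HasDerivAt (fun q => PL j θ (Function.update p k q)) (DPL j k θ) (p k)) ∧
      HasDerivAt (fun q => P j (Function.update p k q)) (∫ θ, DPL j k θ ∂μ) (p k)) :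
    ∀ j k, HasDerivAt (fun q => P j (Function.update p k q))
      ((if j = k then lam j else 0) - gam j k) (p k) := by
  intro j k
  have hPL0 : ∀ i θ, ¬ (p i : EReal) < ς θ → PL i θ p = 0 := fun i θ h => by
    simp [hPL, he, h]
  have hDPL : DPL j k =ᵐ[μ] fun θ => (if j = k then Dw k θ (p k) * PL j θ p else 0) -
      PL j θ p * PL k θ p * Dw k θ (p k) := by
    filter_upwards [(hLeib j k).1, hw k] with θ hder hwθ
    refine (uniqueDiffWithinAt_Ici _).eq_deriv _ hder.hasDerivWithinAt ?_
    simpa only [hPL, logitShare] using hasDerivWithinAt_Ici_logitShare_update (he · θ) (ϑ θ) j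
      fun h => (hwθ h).add_const (v k θ)
  have hlamOff : ∀ θ ∉ {θ | (p j : EReal) < ς θ}, Dw j θ (p j) * PL j θ p = 0 :=
    fun θ h => by rw [hPL0 j θ h, mul_zero]
  have hgamOff : ∀ θ ∉ {θ | (p j : EReal) < ς θ ∧ (p k : EReal) < ς θ},
      PL j θ p * PL k θ p * Dw k θ (p k) = 0 := fun θ h => by
    rcases not_and_or.1 h with h | h <;> simp [hPL0 _ θ h]
  have hgamI := (integrableOn_iff_integrable_of_support_subset
    (support_subset_iff'.2 hgamOff)).1 (hgamInt j k)
  rw [hgam, setIntegral_eq_integral_of_forall_compl_eq_zero hgamOff]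
  convert (hLeib j k).2 using 1
  rw [integral_congr_ae hDPL]
  split_ifs with hjk
  · subst hjk
    have hlamI := (integrableOn_iff_integrable_of_support_subset
      (support_subset_iff'.2 hlamOff)).1 (hlamInt j)
    rw [integral_sub hlamI hgamI, hlam, setIntegral_eq_integral_of_forall_compl_eq_zero hlamOff]
  · simp only [zero_sub, integral_neg]

/-- If the Leibniz rule holds for the Mixed Logit choice
probabilities at `p`, then the Jacobian of `P` at `p` is `Λ(p) − Γ(p)`:
`(∂P_j/∂p_k)(p) = δ_{j,k} λ_j(p) − γ_{j,k}(p)`. -/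
theorem stmt1 {J : ℕ} {T : Type*} [MeasurableSpace T]
    (μ : Measure T) [IsProbabilityMeasure μ]
    (w Dw : Fin J → T → ℝ → ℝ) (v : Fin J → T → ℝ)
    (ϑ : T → ℝ) (ς : T → EReal)
    (e : Fin J → T → ℝ → ℝ)
    (he : ∀ j θ q, e j θ q =
      if (q : EReal) < ς θ then Real.exp (w j θ q + v j θ) else 0)
    (PL : Fin J → T → (Fin J → ℝ) → ℝ)
    (hPL : ∀ j θ r, PL j θ r = e j θ (r j) / (Real.exp (ϑ θ) + ∑ i, e i θ (r i)))
    (P : Fin J → (Fin J → ℝ) → ℝ)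
    (hP : ∀ j r, P j r = ∫ θ, PL j θ r ∂μ)
    (p : Fin J → ℝ)
    (hp : ∀ j, 0 < p j ∧ (p j : EReal) < essSup ς μ)
    (hw : ∀ j, ∀ᵐ θ ∂μ, (p j : EReal) < ς θ →
      HasDerivAt (w j θ) (Dw j θ (p j)) (p j))
    (lam : Fin J → ℝ)
    (hlam : ∀ j, lam j =
      ∫ θ in {θ | (p j : EReal) < ς θ}, Dw j θ (p j) * PL j θ p ∂μ)
    (hlamInt : ∀ j, IntegrableOn (fun θ => Dw j θ (p j) * PL j θ p)
      {θ | (p j : EReal) < ς θ} μ)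
    (gam : Fin J → Fin J → ℝ)
    (hgam : ∀ j k, gam j k =
      ∫ θ in {θ | (p j : EReal) < ς θ ∧ (p k : EReal) < ς θ},
        PL j θ p * PL k θ p * Dw k θ (p k) ∂μ)
    (hgamInt : ∀ j k, IntegrableOn (fun θ => PL j θ p * PL k θ p * Dw k θ (p k))
      {θ | (p j : EReal) < ς θ ∧ (p k : EReal) < ς θ} μ)
    (DPL : Fin J → Fin J → T → ℝ)
    -- the Leibniz rule : pointwise derivatives exist a.e. and may be passed
    -- through the integral defining the Mixed Logit choice probabilities
    (hLeib : ∀ j k,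
      (∀ᵐ θ ∂μ, HasDerivAt (fun q => PL j θ (Function.update p k q)) (DPL j k θ) (p k)) ∧
      HasDerivAt (fun q => P j (Function.update p k q)) (∫ θ, DPL j k θ ∂μ) (p k)) :
    ∀ j k, HasDerivAt (fun q => P j (Function.update p k q))
      ((if j = k then lam j else 0) - gam j k) (p k) :=
  stmt1_general μ w Dw v ϑ ς e he PL hPL P p hw lam hlam hlamInt gam hgam hgamInt DPL hLeib
end

section
/- Let p ∈ (0,ς_*)^J, assume ϑ(θ) ∈ ℝ is finite for μ-a.e. θ, assume μ(L(p_k)) > 0 and (Dw_k)(θ,p_k) < 0 for μ-a.e. θ ∈ L(p_k) for each k (so λ_k(p) < 0), and let Γ̃(p) be the matrix with (Γ̃(p))_{j,k} = γ_{j,k}(p) when f(j) = f(k) and 0 otherwise. Define Ω̃(p) = Λ(p)^{−1} Γ̃(p)ᵀ. Then: (ii) the induced ∞-norm satisfies ‖Ω̃(p)‖_∞ < 1 (every row sum of absolute values of Ω̃(p) is strictly less than 1); (iii) the matrix I − Ω̃(p) is strictly diagonally dominant and nonsingular, and consequently (D̃P)(p)ᵀ = Λ(p)(I − Ω̃(p))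 is nonsingular, where (D̃P)(p)_{j,k} = δ_{j,k}λ_j(p) − (Γ̃(p))_{j,k}. -/
open MeasureTheory

/-- With a finite outside-good utility, `λ_k(p) < 0`, the matrix
`Ω̃(p) = Λ(p)⁻¹ Γ̃(p)ᵀ` has induced ∞-norm (maximal row sum of absolute
values) strictly less than one, `I − Ω̃(p)` is strictly diagonally dominant and
nonsingular, and `(D̃P)(p)ᵀ = Λ(p)(I − Ω̃(p))` is nonsingular. -/
theorem stmt3 {J F : ℕ} {T : Type*} [MeasurableSpace T]
    (μ : Measure T) [IsProbabilityMeasure μ]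
    (w Dw : Fin J → T → ℝ → ℝ) (v : Fin J → T → ℝ)
    (ϑ : T → ℝ) (ς : T → EReal)
    (e : Fin J → T → ℝ → ℝ)
    (he : ∀ j θ q, e j θ q =
      if (q : EReal) < ς θ then Real.exp (w j θ q + v j θ) else 0)
    (PL : Fin J → T → (Fin J → ℝ) → ℝ)
    (hPL : ∀ j θ r, PL j θ r = e j θ (r j) / (Real.exp (ϑ θ) + ∑ i, e i θ (r i)))
    (p : Fin J → ℝ)
    (hp : ∀ j, 0 < p j ∧ (p j : EReal) < essSup ς μ)
    (firm : Fin J → Fin F)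
    (lam : Fin J → ℝ)
    (hlam : ∀ j, lam j =
      ∫ θ in {θ | (p j : EReal) < ς θ}, Dw j θ (p j) * PL j θ p ∂μ)
    (hlamInt : ∀ j, IntegrableOn (fun θ => Dw j θ (p j) * PL j θ p)
      {θ | (p j : EReal) < ς θ} μ)
    (gam : Fin J → Fin J → ℝ)
    (hgam : ∀ j k, gam j k =
      ∫ θ in {θ | (p j : EReal) < ς θ ∧ (p k : EReal) < ς θ},
        PL j θ p * PL k θ p * Dw k θ (p k) ∂μ)
    (hgamInt : ∀ j k, IntegrableOn (fun θ => PL j θ p * PL k θ p * Dw k θ (p k))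
      {θ | (p j : EReal) < ς θ ∧ (p k : EReal) < ς θ} μ)
    (hLmeas : ∀ k, MeasurableSet {θ | (p k : EReal) < ς θ})
    (hLpos : ∀ k, 0 < μ {θ | (p k : EReal) < ς θ})
    (hDwneg : ∀ k, ∀ᵐ θ ∂μ, (p k : EReal) < ς θ → Dw k θ (p k) < 0)
    (Γt : Matrix (Fin J) (Fin J) ℝ)
    (hΓt : ∀ j k, Γt j k = if firm j = firm k then gam j k else 0)
    (Ω : Matrix (Fin J) (Fin J) ℝ)
    (hΩ : ∀ j k, Ω j k = Γt k j / lam j)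
    (DtP : Matrix (Fin J) (Fin J) ℝ)
    (hDtP : ∀ j k, DtP j k = (if j = k then lam j else 0) - Γt j k) :
    (∀ k, lam k < 0) ∧
    -- (ii) every row sum of absolute values of Ω̃(p) is < 1
    (∀ j, ∑ k, |Ω j k| < 1) ∧
    -- (iii) I − Ω̃(p) is strictly diagonally dominant ...
    (∀ j, ∑ k ∈ Finset.univ.erase j, |(1 - Ω) j k| < |(1 - Ω) j j|) ∧
    -- ... (D̃P)(p)ᵀ = Λ(p)(I − Ω̃(p)), and both are nonsingular
    DtP.transpose = Matrix.diagonal lam * (1 - Ω) ∧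
    (1 - Ω).det ≠ 0 ∧ DtP.transpose.det ≠ 0 := by
  set L : Fin J → Set T := fun k => {θ | (p k : EReal) < ς θ} with hLdef
  -- pointwise facts
  have henn : ∀ j θ, 0 ≤ e j θ (p j) := by
    intro j θ; rw [he]; split
    · exact (Real.exp_pos _).le
    · exact le_refl 0
  have he0 : ∀ j θ, θ ∉ L j → e j θ (p j) = 0 := by
    intro j θ h; rw [he]; exact if_neg h
  have hepos : ∀ j θ, θ ∈ L j → 0 < e j θ (p j) := by
    intro j θ h
    have h' : ((p j : ℝ) : EReal) < ς θ := h
    rw [he, if_pos h']; exact Real.exp_pos _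
  have hDpos : ∀ θ, 0 < Real.exp (ϑ θ) + ∑ i, e i θ (p i) :=
    fun θ => add_pos_of_pos_of_nonneg (Real.exp_pos _)
      (Finset.sum_nonneg fun i _ => henn i θ)
  have hPLnn : ∀ j θ, 0 ≤ PL j θ p := by
    intro j θ; rw [hPL]; exact div_nonneg (henn j θ) (hDpos θ).le
  have hPL0 : ∀ j θ, θ ∉ L j → PL j θ p = 0 := by
    intro j θ h; rw [hPL, he0 j θ h, zero_div]
  have hPLpos : ∀ j θ, θ ∈ L j → 0 < PL j θ p := by
    intro j θ h; rw [hPL]; exact div_pos (hepos j θ h) (hDpos θ)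
  have hSlt : ∀ θ, ∑ k, PL k θ p < 1 := by
    intro θ
    have : ∑ k, PL k θ p = (∑ k, e k θ (p k)) / (Real.exp (ϑ θ) + ∑ i, e i θ (p i)) := by
      rw [Finset.sum_div]; exact Finset.sum_congr rfl fun k _ => hPL k θ p
    rw [this, div_lt_one (hDpos θ)]
    exact lt_add_of_pos_left _ (Real.exp_pos _)
  -- positivity of integrals of a.e.-positive functions over L j
  have key : ∀ (j : Fin J) (G : T → ℝ), Integrable G (μ.restrict (L j)) →
      (∀ᵐ θ ∂(μ.restrict (L j)), 0 < G θ) → 0 < ∫ θ, G θ ∂(μ.restrict (L j)) := by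
    intro j G hInt hpos
    rw [integral_pos_iff_support_of_nonneg_ae (hpos.mono fun θ h => h.le) hInt]
    have hc : μ.restrict (L j) (Function.support G)ᶜ = 0 := by
      refine measure_mono_null (fun θ hθ => ?_) (ae_iff.mp hpos)
      simp only [Set.mem_compl_iff, Function.mem_support, not_not] at hθ
      simp [hθ]
    have hle : μ.restrict (L j) Set.univ ≤
        μ.restrict (L j) (Function.support G) + μ.restrict (L j) (Function.support G)ᶜ := by
      rw [← Set.union_compl_self (Function.support G)]
      exact measure_union_le _ _
    rw [hc, add_zero, Measure.restrict_apply_univ] at hle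
    exact lt_of_lt_of_le (hLpos j) hle
  -- (i) lam j < 0
  have hlamneg : ∀ j, lam j < 0 := by
    intro j
    have hpos : 0 < ∫ θ in L j, -(Dw j θ (p j) * PL j θ p) ∂μ := by
      refine key j _ (hlamInt j).neg ?_
      filter_upwards [ae_restrict_mem (hLmeas j), ae_restrict_of_ae (hDwneg j)] with θ hθ hdw
      exact neg_pos.2 (mul_neg_of_neg_of_pos (hdw hθ) (hPLpos j θ hθ))
    rw [integral_neg] at hpos
    rw [hlam j]
    linarith
  -- gam over L j
  have hSeq : ∀ k j : Fin J,
      {θ | (p k : EReal) < ς θ ∧ (p j : EReal) < ς θ} = L k ∩ L j := by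
    intro k j; rfl
  have hind : ∀ (k j : Fin J), Set.indicator (L k)
      (fun θ => PL k θ p * PL j θ p * Dw j θ (p j)) =
      (fun θ => PL k θ p * PL j θ p * Dw j θ (p j)) := by
    intro k j; funext θ
    by_cases h : θ ∈ L k
    · rw [Set.indicator_of_mem h]
    · rw [Set.indicator_of_notMem h, hPL0 k θ h, zero_mul, zero_mul]
  have hgamInt' : ∀ (k j : Fin J),
      IntegrableOn (fun θ => PL k θ p * PL j θ p * Dw j θ (p j)) (L j) μ := by
    intro k j
    have h1 : Integrable (Set.indicator (L k ∩ L j)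
        (fun θ => PL k θ p * PL j θ p * Dw j θ (p j))) μ := by
      rw [integrable_indicator_iff ((hLmeas k).inter (hLmeas j))]
      rw [← hSeq k j]
      exact hgamInt k j
    rw [← integrable_indicator_iff (hLmeas j)]
    have h2 : Set.indicator (L j) (fun θ => PL k θ p * PL j θ p * Dw j θ (p j)) =
        Set.indicator (L k ∩ L j) (fun θ => PL k θ p * PL j θ p * Dw j θ (p j)) := by
      rw [Set.inter_comm, ← Set.indicator_indicator, hind k j]
    rw [h2]; exact h1
  have hgam' : ∀ (k j : Fin J), gam k j =
      ∫ θ in L j, PL k θ p * PL j θ p * Dw j θ (p j) ∂μ := by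
    intro k j
    rw [hgam k j]
    have : ∫ θ in L j, PL k θ p * PL j θ p * Dw j θ (p j) ∂μ =
        ∫ θ in L j, Set.indicator (L k) (fun θ => PL k θ p * PL j θ p * Dw j θ (p j)) θ ∂μ := by
      rw [hind k j]
    rw [this, setIntegral_indicator (hLmeas k), hSeq k j, Set.inter_comm]
  have hgamnp : ∀ k j : Fin J, gam k j ≤ 0 := by
    intro k j
    rw [hgam' k j]
    refine integral_nonpos_of_ae ?_
    filter_upwards [ae_restrict_mem (hLmeas j), ae_restrict_of_ae (hDwneg j)] with θ hθ hdw
    exact mul_nonpos_of_nonneg_of_nonpos (mul_nonneg (hPLnn k θ) (hPLnn j θ)) (hdw hθ).le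
  -- strict dominance: ∑ k, -gam k j < -lam j
  have hstrict : ∀ j, lam j < ∑ k, gam k j := by
    intro j
    have hFint : Integrable (fun θ => (∑ k, PL k θ p * PL j θ p * Dw j θ (p j))
        - Dw j θ (p j) * PL j θ p) (μ.restrict (L j)) :=
      (integrable_finset_sum _ fun k _ => hgamInt' k j).sub (hlamInt j)
    have hFpos : 0 < ∫ θ in L j, ((∑ k, PL k θ p * PL j θ p * Dw j θ (p j))
        - Dw j θ (p j) * PL j θ p) ∂μ := by
      refine key j _ hFint ?_
      filter_upwards [ae_restrict_mem (hLmeas j), ae_restrict_of_ae (hDwneg j)] with θ hθ hdw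
      have h1 : (∑ k, PL k θ p * PL j θ p * Dw j θ (p j)) - Dw j θ (p j) * PL j θ p
          = (1 - ∑ k, PL k θ p) * (PL j θ p * (-Dw j θ (p j))) := by
        rw [← Finset.sum_mul, ← Finset.sum_mul]; ring
      rw [h1]
      exact mul_pos (sub_pos.2 (hSlt θ))
        (mul_pos (hPLpos j θ hθ) (neg_pos.2 (hdw hθ)))
    rw [integral_sub (integrable_finset_sum _ fun k _ => hgamInt' k j) (hlamInt j),
      integral_finset_sum _ (fun k _ => hgamInt' k j)] at hFpos
    have hsg : ∑ k, gam k j = ∑ k, ∫ θ in L j, PL k θ p * PL j θ p * Dw j θ (p j) ∂μ :=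
      Finset.sum_congr rfl fun k _ => hgam' k j
    rw [hlam j, hsg]
    linarith
  -- (ii)
  have hrow : ∀ j, ∑ k, |Ω j k| < 1 := by
    intro j
    have hlamne : lam j ≠ 0 := (hlamneg j).ne
    have h1 : ∀ k, |Ω j k| = |Γt k j| / (-lam j) := by
      intro k; rw [hΩ, abs_div, abs_of_neg (hlamneg j)]
    rw [Finset.sum_congr rfl fun k _ => h1 k, ← Finset.sum_div,
      div_lt_one (by linarith [hlamneg j])]
    have h2 : ∑ k, |Γt k j| ≤ ∑ k, -gam k j := by
      refine Finset.sum_le_sum fun k _ => ?_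
      rw [hΓt]
      split
      · rw [abs_of_nonpos (hgamnp k j)]
      · rw [abs_zero]; exact neg_nonneg.2 (hgamnp k j)
    calc ∑ k, |Γt k j| ≤ ∑ k, -gam k j := h2
      _ = -∑ k, gam k j := by rw [Finset.sum_neg_distrib]
      _ < -lam j := by linarith [hstrict j]
  -- (iii)
  have hdom : ∀ j, ∑ k ∈ Finset.univ.erase j, |(1 - Ω) j k| < |(1 - Ω) j j| := by
    intro j
    have h1 : ∀ k ∈ Finset.univ.erase j, |(1 - Ω) j k| = |Ω j k| := by
      intro k hk
      have hkj : k ≠ j := Finset.ne_of_mem_erase hk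
      rw [Matrix.sub_apply, Matrix.one_apply_ne (Ne.symm hkj), zero_sub, abs_neg]
    rw [Finset.sum_congr rfl h1]
    have h2 : ∑ k ∈ Finset.univ.erase j, |Ω j k| = (∑ k, |Ω j k|) - |Ω j j| :=
      Finset.sum_erase_eq_sub (Finset.mem_univ j)
    have h3 : |(1 - Ω) j j| = |1 - Ω j j| := by
      rw [Matrix.sub_apply, Matrix.one_apply_eq]
    rw [h2, h3]
    have h4 : 1 - |Ω j j| ≤ |1 - Ω j j| := by
      calc 1 - |Ω j j| = |(1:ℝ)| - |Ω j j| := by rw [abs_one]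
        _ ≤ |1 - Ω j j| := abs_sub_abs_le_abs_sub 1 (Ω j j)
    linarith [hrow j]
  -- matrix identity
  have hmat : DtP.transpose = Matrix.diagonal lam * (1 - Ω) := by
    ext j k
    have hlamne : lam j ≠ 0 := (hlamneg j).ne
    rw [Matrix.transpose_apply, hDtP, Matrix.diagonal_mul, Matrix.sub_apply,
      Matrix.one_apply, hΩ, mul_sub, mul_div_cancel₀ _ hlamne, mul_ite, mul_one, mul_zero]
    congr 1
    by_cases h : j = k
    · rw [if_pos h.symm, if_pos h, h]
    · rw [if_neg (Ne.symm h), if_neg h]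
  have hdet1 : (1 - Ω).det ≠ 0 := by
    refine det_ne_zero_of_sum_row_lt_diag (fun j => ?_)
    simp only [Real.norm_eq_abs]
    exact hdom j
  have hdet2 : DtP.transpose.det ≠ 0 := by
    rw [hmat, Matrix.det_mul, Matrix.det_diagonal]
    exact mul_ne_zero (Finset.prod_ne_zero_iff.2 fun j _ => (hlamneg j).ne) hdet1
  exact ⟨hlamneg, hrow, hdom, hmat, hdet1, hdet2⟩
end

section
/- Let Ω ∈ ℝ^{J×J} have nonnegative entries with every row sum strictly less than 1 (i.e. ‖Ω‖_∞ < 1 in the induced ∞-norm), and let b ∈ ℝ^J have all entries strictly positive. Then I − Ω is invertible and the unique solution η of (I − Ω)η = b has all entries strictly positive. In particular, in the Mixed Logit Bertrand model where the markup map η(p) solves (I − Ω̃(p))η(p) = −Λ(p)^{−1}P(p) with −Λ(p)^{−1}P(p) entrywise positive and Ω̃(p) entrywise nonnegative with ‖Ω̃(p)‖_∞ < 1, one has η(p) > 0 entrywise; hence any local equilibrium p with (D̃P)(p)ᵀ(p−c) + P(p) = 0 satisfies p > c entrywise. -/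
lemma aux_min {J : ℕ} (Ω : Matrix (Fin J) (Fin J) ℝ)
    (hΩnn : ∀ i j, 0 ≤ Ω i j)
    (hΩrow : ∀ i, ∑ j, |Ω i j| < 1)
    (η b : Fin J → ℝ) (h : (1 - Ω).mulVec η = b)
    (i : Fin J) (hmin : ∀ j, η i ≤ η j) :
    b i ≤ (1 - ∑ j, Ω i j) * η i := by
  have hb : b i = η i - ∑ j, Ω i j * η j := by
    rw [← h, Matrix.sub_mulVec, Matrix.one_mulVec]
    simp [Matrix.mulVec, dotProduct]
  have hsum : (∑ j, Ω i j) * η i ≤ ∑ j, Ω i j * η j := by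
    rw [Finset.sum_mul]
    exact Finset.sum_le_sum fun j _ => mul_le_mul_of_nonneg_left (hmin j) (hΩnn i j)
  rw [hb]; nlinarith [hsum]

lemma aux_strict {J : ℕ} (Ω : Matrix (Fin J) (Fin J) ℝ)
    (hΩnn : ∀ i j, 0 ≤ Ω i j)
    (hΩrow : ∀ i, ∑ j, |Ω i j| < 1)
    (η b : Fin J → ℝ) (h : (1 - Ω).mulVec η = b)
    (hb : ∀ i, 0 < b i) : ∀ i, 0 < η i := by
  intro k
  rcases isEmpty_or_nonempty (Fin J) with hJ | hJ
  · exact (hJ.false k).elim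
  obtain ⟨i, _, hmin⟩ := Finset.exists_min_image Finset.univ η ⟨k, Finset.mem_univ k⟩
  have hle := aux_min Ω hΩnn hΩrow η b h i (fun j => hmin j (Finset.mem_univ j))
  have hs : ∑ j, Ω i j < 1 := by
    have := hΩrow i
    calc ∑ j, Ω i j = ∑ j, |Ω i j| := by
          refine Finset.sum_congr rfl fun j _ => (abs_of_nonneg (hΩnn i j)).symm
      _ < 1 := this
  have hηi : 0 < η i := by nlinarith [hb i]
  exact lt_of_lt_of_le hηi (hmin k (Finset.mem_univ k))

lemma aux_nonneg {J : ℕ} (Ω : Matrix (Fin J) (Fin J) ℝ)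
    (hΩnn : ∀ i j, 0 ≤ Ω i j)
    (hΩrow : ∀ i, ∑ j, |Ω i j| < 1)
    (η : Fin J → ℝ) (h : (1 - Ω).mulVec η = 0) : ∀ i, 0 ≤ η i := by
  intro k
  rcases isEmpty_or_nonempty (Fin J) with hJ | hJ
  · exact (hJ.false k).elim
  obtain ⟨i, _, hmin⟩ := Finset.exists_min_image Finset.univ η ⟨k, Finset.mem_univ k⟩
  have hle := aux_min Ω hΩnn hΩrow η 0 h i (fun j => hmin j (Finset.mem_univ j))
  have hs : ∑ j, Ω i j < 1 := by
    have := hΩrow i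
    calc ∑ j, Ω i j = ∑ j, |Ω i j| := by
          refine Finset.sum_congr rfl fun j _ => (abs_of_nonneg (hΩnn i j)).symm
      _ < 1 := this
  have hηi : 0 ≤ η i := by simp at hle; nlinarith
  exact le_trans hηi (hmin k (Finset.mem_univ k))

/-- If `Ω` has nonnegative entries and every row sum (of absolute
values) strictly less than one, then `I − Ω` is invertible and any solution of
`(I − Ω)η = b` with `b > 0` entrywise is entrywise positive.  In particular, in
the Mixed Logit Bertrand model (`Λ` a negative diagonal matrix, `P > 0`), any
local equilibrium `p` satisfying `(D̃P)(p)ᵀ(p − c) + P(p) = 0`, where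
`(D̃P)(p)ᵀ = Λ(I − Ω)`, has `p > c` entrywise. -/
theorem stmt4 {J : ℕ}
    (Ω : Matrix (Fin J) (Fin J) ℝ)
    (hΩnn : ∀ i j, 0 ≤ Ω i j)
    (hΩrow : ∀ i, ∑ j, |Ω i j| < 1)
    (b : Fin J → ℝ) (hb : ∀ i, 0 < b i)
    (lam : Fin J → ℝ) (hlam : ∀ i, lam i < 0)
    (Pv : Fin J → ℝ) (hPv : ∀ i, 0 < Pv i)
    (p c : Fin J → ℝ)
    (hstat : (Matrix.diagonal lam * (1 - Ω)).mulVec (p - c) + Pv = 0) :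
    IsUnit (1 - Ω) ∧
    (∀ η : Fin J → ℝ, (1 - Ω).mulVec η = b → ∀ i, 0 < η i) ∧
    (∀ i, c i < p i) := by
  have hker : ∀ v : Fin J → ℝ, (1 - Ω).mulVec v = 0 → v = 0 := by
    intro v hv
    have h1 := aux_nonneg Ω hΩnn hΩrow v hv
    have hv' : (1 - Ω).mulVec (-v) = 0 := by
      rw [Matrix.mulVec_neg, hv]; simp
    have h2 := aux_nonneg Ω hΩnn hΩrow (-v) hv'
    funext i
    have := h2 i
    simp at this
    exact le_antisymm this (h1 i)
  have hdet : (1 - Ω).det ≠ 0 := by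
    intro h0
    obtain ⟨v, hv0, hv⟩ := (Matrix.exists_mulVec_eq_zero_iff).2 h0
    exact hv0 (hker v hv)
  refine ⟨(Matrix.isUnit_iff_isUnit_det _).2 (isUnit_iff_ne_zero.2 hdet), ?_, ?_⟩
  · intro η hη
    exact aux_strict Ω hΩnn hΩrow η b hη hb
  · -- from hstat: lam i * ((1-Ω).mulVec (p-c)) i + Pv i = 0
    have hstat' : (Matrix.diagonal lam).mulVec ((1 - Ω).mulVec (p - c)) + Pv = 0 := by
      rw [Matrix.mulVec_mulVec]; exact hstat
    have hsolve : (1 - Ω).mulVec (p - c) = fun i => -Pv i / lam i := by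
      funext i
      have h1 := congrFun hstat' i
      rw [Pi.add_apply, Matrix.mulVec_diagonal, Pi.zero_apply] at h1
      have hl := (hlam i).ne
      rw [eq_div_iff hl]
      linarith [h1]
    have hpos : ∀ i, 0 < ((fun i => -Pv i / lam i) : Fin J → ℝ) i := by
      intro i
      exact div_pos_of_neg_of_neg (by linarith [hPv i]) (hlam i)
    have := aux_strict Ω hΩnn hΩrow (p - c) _ hsolve hpos
    intro i
    have := this i
    simp at this
    linarith
end

section
/- Let c ∈ ℝ^J, ε ∈ (0,1), M > 0, let Ω : ℝ^J → ℝ^{J×J} and b : ℝ^J → ℝ^J satisfy ‖Ω(p)‖_∞ ≤ 1 − ε and ‖b(p)‖_∞ ≤ M for all p, let η(p) = (I − Ω(p))^{−1}b(p), and let ζ(p) = Ω(p)(p − c) + b(p). Then both F_η(p) = p − c − η(p) and F_ζ(p) = p − c − ζ(p) are norm-coercive: ‖p − c − η(p)‖_∞ → ∞ and ‖p − c − ζ(p)‖_∞ → ∞ as ‖p‖_∞ → ∞. -/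
open Filter

/-- The operator norm on `J × J` real matrices induced by the ∞-norm on `ℝ^J`:
the maximum over rows of the sum of absolute values of the row's entries. -/
noncomputable def matInfNorm {J : ℕ} (Ω : Matrix (Fin J) (Fin J) ℝ) : ℝ :=
  ⨆ i, ∑ j, |Ω i j|

lemma matInfNorm_nonneg {J : ℕ} (A : Matrix (Fin J) (Fin J) ℝ) : 0 ≤ matInfNorm A := by
  rcases Nat.eq_zero_or_pos J with h | h
  · subst h
    simp [matInfNorm, Real.iSup_of_isEmpty]
  · have i : Fin J := ⟨0, h⟩
    calc (0:ℝ) ≤ ∑ j, |A i j| := Finset.sum_nonneg fun j _ => abs_nonneg _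
    _ ≤ matInfNorm A := le_ciSup (f := fun i => ∑ j, |A i j|) (Set.Finite.bddAbove (Set.finite_range _)) i

lemma mulVec_norm_le {J : ℕ} (A : Matrix (Fin J) (Fin J) ℝ) (v : Fin J → ℝ) :
    ‖A.mulVec v‖ ≤ matInfNorm A * ‖v‖ := by
  apply pi_norm_le_iff_of_nonneg (mul_nonneg (matInfNorm_nonneg A) (norm_nonneg v)) |>.2
  intro i
  have h1 : ‖A.mulVec v i‖ ≤ ∑ j, |A i j| * ‖v‖ := by
    calc ‖A.mulVec v i‖ = |∑ j, A i j * v j| := by simp [Matrix.mulVec, dotProduct, Real.norm_eq_abs]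
    _ ≤ ∑ j, |A i j * v j| := Finset.abs_sum_le_sum_abs _ _
    _ ≤ ∑ j, |A i j| * ‖v‖ := by
        apply Finset.sum_le_sum
        intro j _
        rw [abs_mul]
        exact mul_le_mul_of_nonneg_left (norm_le_pi_norm v j) (abs_nonneg _)
  calc ‖A.mulVec v i‖ ≤ (∑ j, |A i j|) * ‖v‖ := by rw [Finset.sum_mul] at *; exact h1
  _ ≤ matInfNorm A * ‖v‖ :=
      mul_le_mul_of_nonneg_right (le_ciSup (f := fun i => ∑ j, |A i j|) (Set.Finite.bddAbove (Set.finite_range _)) i) (norm_nonneg v)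

/-- Under the boundedness assumptions `‖Ω(p)‖_∞ ≤ 1 − ε` and
`‖b(p)‖_∞ ≤ M`, both the BLP-markup residual `F_η(p) = p − c − η(p)` (where
`(I − Ω(p))η(p) = b(p)`) and the ζ-markup residual `F_ζ(p) = p − c − ζ(p)`
(where `ζ(p) = Ω(p)(p − c) + b(p)`) are norm-coercive. -/
theorem stmt12 {J : ℕ} (c : Fin J → ℝ) (ε M : ℝ)
    (hε : ε ∈ Set.Ioo (0 : ℝ) 1) (hM : 0 < M)
    (Ω : (Fin J → ℝ) → Matrix (Fin J) (Fin J) ℝ)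
    (b : (Fin J → ℝ) → Fin J → ℝ)
    (hΩ : ∀ p, matInfNorm (Ω p) ≤ 1 - ε)
    (hb : ∀ p, ‖b p‖ ≤ M)
    (η ζ : (Fin J → ℝ) → Fin J → ℝ)
    (hη : ∀ p, (1 - Ω p).mulVec (η p) = b p)
    (hζ : ∀ p, ζ p = (Ω p).mulVec (p - c) + b p) :
    Tendsto (fun p => ‖p - c - η p‖)
      (comap (fun p : Fin J → ℝ => ‖p‖) atTop) atTop ∧
    Tendsto (fun p => ‖p - c - ζ p‖)
      (comap (fun p : Fin J → ℝ => ‖p‖) atTop) atTop := by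
  obtain ⟨hε0, hε1⟩ := hε
  have hL : Tendsto (fun p : Fin J → ℝ => ‖p‖)
      (comap (fun p : Fin J → ℝ => ‖p‖) atTop) atTop := tendsto_comap
  -- bound on η
  have hηbd : ∀ p, ‖η p‖ ≤ M / ε := by
    intro p
    have h1 : η p - (Ω p).mulVec (η p) = b p := by
      have := hη p
      rwa [Matrix.sub_mulVec, Matrix.one_mulVec] at this
    have h2 : ‖η p‖ ≤ ‖b p‖ + ‖(Ω p).mulVec (η p)‖ := by
      calc ‖η p‖ = ‖(η p - (Ω p).mulVec (η p)) + (Ω p).mulVec (η p)‖ := by ring_nf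
      _ ≤ ‖η p - (Ω p).mulVec (η p)‖ + ‖(Ω p).mulVec (η p)‖ := norm_add_le _ _
      _ = ‖b p‖ + ‖(Ω p).mulVec (η p)‖ := by rw [h1]
    have h3 : ‖(Ω p).mulVec (η p)‖ ≤ (1 - ε) * ‖η p‖ :=
      (mulVec_norm_le _ _).trans (mul_le_mul_of_nonneg_right (hΩ p) (norm_nonneg _))
    have h4 : ε * ‖η p‖ ≤ M := by nlinarith [hb p]
    rw [le_div_iff₀ hε0]; linarith
  constructor
  · apply tendsto_atTop_mono (f := fun p : Fin J → ℝ => ‖p‖ + -(‖c‖ + M / ε))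
    · intro p
      have : ‖p‖ ≤ ‖p - c - η p‖ + (‖c‖ + M / ε) := by
        calc ‖p‖ = ‖(p - c - η p) + (c + η p)‖ := by ring_nf
        _ ≤ ‖p - c - η p‖ + ‖c + η p‖ := norm_add_le _ _
        _ ≤ ‖p - c - η p‖ + (‖c‖ + ‖η p‖) := by linarith [norm_add_le c (η p)]
        _ ≤ ‖p - c - η p‖ + (‖c‖ + M / ε) := by linarith [hηbd p]
      linarith
    · exact tendsto_atTop_add_const_right _ _ hL
  · apply tendsto_atTop_mono (f := fun p : Fin J → ℝ => ε * ‖p‖ + -(ε * ‖c‖ + M))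
    · intro p
      have key : ε * ‖p - c‖ ≤ ‖p - c - ζ p‖ + M := by
        have h1 : p - c - ζ p = (p - c - (Ω p).mulVec (p - c)) - b p := by
          rw [hζ p]; abel
        have h2 : ‖p - c‖ ≤ ‖p - c - (Ω p).mulVec (p - c)‖ + (1 - ε) * ‖p - c‖ := by
          have h3 : ‖(Ω p).mulVec (p - c)‖ ≤ (1 - ε) * ‖p - c‖ :=
            (mulVec_norm_le _ _).trans (mul_le_mul_of_nonneg_right (hΩ p) (norm_nonneg _))
          calc ‖p - c‖ = ‖(p - c - (Ω p).mulVec (p - c)) + (Ω p).mulVec (p - c)‖ := by ring_nf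
          _ ≤ ‖p - c - (Ω p).mulVec (p - c)‖ + ‖(Ω p).mulVec (p - c)‖ := norm_add_le _ _
          _ ≤ _ := by linarith
        have h4 : ‖p - c - (Ω p).mulVec (p - c)‖ ≤ ‖p - c - ζ p‖ + ‖b p‖ := by
          calc ‖p - c - (Ω p).mulVec (p - c)‖ = ‖(p - c - ζ p) + b p‖ := by rw [h1]; ring_nf
          _ ≤ _ := norm_add_le _ _
        nlinarith [hb p]
      have h5 : ‖p - c‖ ≥ ‖p‖ - ‖c‖ := by
        have := norm_sub_norm_le p c; linarith [abs_le.1 (abs_norm_sub_norm_le p c)]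
      nlinarith
    · apply tendsto_atTop_add_const_right
      exact Tendsto.const_mul_atTop hε0 hL
end

section
/- Let c ∈ ℝ^J, M > 0, L ≥ 0, and let ζ : ℝ^J → ℝ^J satisfy: (a) ‖ζ(p)‖_∞ ≤ ‖p − c‖_∞ − M whenever ‖p − c‖_∞ > L, and (b) there is B < ∞ with ‖ζ(p)‖_∞ ≤ B whenever ‖p − c‖_∞ ≤ L (for instance if ζ is continuous). Then for any starting point p^{(0)}, the fixed-point iteration p^{(n+1)} = c + ζ(p^{(n)}) produces a bounded sequence; indeed ‖p^{(n)} − c‖_∞ ≤ max(‖p^{(0)} − c‖_∞, L, B) for all n. -/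
/-- If `‖ζ(p)‖_∞ ≤ ‖p − c‖_∞ − M` whenever `‖p − c‖_∞ > L` and
`‖ζ(p)‖_∞ ≤ B` whenever `‖p − c‖_∞ ≤ L`, then the fixed-point iteration
`p ← c + ζ(p)` produces a bounded sequence:
`‖p⁽ⁿ⁾ − c‖_∞ ≤ max(‖p⁽⁰⁾ − c‖_∞, L, B)` for all `n`. -/
theorem stmt15 {J : ℕ} (c : Fin J → ℝ) (M L B : ℝ)
    (hM : 0 < M) (hL : 0 ≤ L)
    (ζ : (Fin J → ℝ) → Fin J → ℝ)
    (ha : ∀ p : Fin J → ℝ, L < ‖p - c‖ → ‖ζ p‖ ≤ ‖p - c‖ - M)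
    (hbB : ∀ p : Fin J → ℝ, ‖p - c‖ ≤ L → ‖ζ p‖ ≤ B)
    (p0 : Fin J → ℝ) (pseq : ℕ → Fin J → ℝ)
    (h0 : pseq 0 = p0)
    (hiter : ∀ n, pseq (n + 1) = c + ζ (pseq n)) :
    ∀ n, ‖pseq n - c‖ ≤ max (max ‖p0 - c‖ L) B := by
  intro n
  induction n with
  | zero =>
    rw [h0]
    exact le_max_of_le_left (le_max_left _ _)
  | succ n ih =>
    have hkey : pseq (n + 1) - c = ζ (pseq n) := by
      rw [hiter n]; abel
    rw [hkey]
    rcases le_or_gt ‖pseq n - c‖ L with h | h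
    · exact le_max_of_le_right (hbB _ h)
    · have := ha _ h
      have : ‖ζ (pseq n)‖ ≤ ‖pseq n - c‖ := le_trans this (by linarith)
      exact le_trans this ih
end

section
/- Let ς_* < ∞, let G : [0,ς_*]^J → ℝ^J, and suppose G_k(p) = 0 whenever p_k = ς_*. Let J′ ⊊ {1,…,J} and suppose p* ∈ [0,ς_*]^J satisfies p*_k = ς_* for all k ∉ J′ and solves the sub-variational inequality Σ_{j ∈ J′} G_j(p*)(p*_j − q_j) ≥ 0 for all (q_j)_{j∈J′} ∈ [0,ς_*]^{J′}. Then p* solves the full variational inequality: Σ_{j=1}^J G_j(p*)(p*_j − q_j) ≥ 0 for all q ∈ [0,ς_*]^J. In particular (taking J′ = ∅), the point ς_*·(1,…,1) always solves the full variational inequality. -/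
/-- If `G_k(p) = 0` whenever `p_k = ς_*`, and `p*` agrees with
`ς_*` off a proper subset `J′` of the products and solves the sub-variational
inequality on `J′`, then `p*` solves the full variational inequality on
`[0,ς_*]^J`.  In particular (the case `J′ = ∅`), the point `ς_*·(1,…,1)`
always solves the full variational inequality. -/
theorem stmt19 {J : ℕ} (ςstar : ℝ)
    (G : (Fin J → ℝ) → Fin J → ℝ)
    (hG : ∀ p : Fin J → ℝ, ∀ k, p k = ςstar → G p k = 0)
    (J' : Finset (Fin J)) (hJ' : J' ⊂ Finset.univ)
    (pstar : Fin J → ℝ) (hbox : ∀ k, pstar k ∈ Set.Icc 0 ςstar)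
    (hout : ∀ k ∉ J', pstar k = ςstar)
    (hsub : ∀ q : Fin J → ℝ, (∀ j, q j ∈ Set.Icc 0 ςstar) →
      0 ≤ ∑ j ∈ J', G pstar j * (pstar j - q j)) :
    (∀ q : Fin J → ℝ, (∀ j, q j ∈ Set.Icc 0 ςstar) →
      0 ≤ ∑ j, G pstar j * (pstar j - q j)) ∧
    (∀ q : Fin J → ℝ, (∀ j, q j ∈ Set.Icc 0 ςstar) →
      0 ≤ ∑ j, G (fun _ => ςstar) j * (ςstar - q j)) := by
  constructor
  · intro q hq
    have hsum : ∑ j, G pstar j * (pstar j - q j)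
        = ∑ j ∈ J', G pstar j * (pstar j - q j) := by
      rw [← Finset.sum_subset (Finset.subset_univ J')]
      intro k _ hk
      rw [hG pstar k (hout k hk)]; ring
    rw [hsum]; exact hsub q hq
  · intro q hq
    have : ∀ j, G (fun _ => ςstar) j * (ςstar - q j) = 0 := by
      intro j; rw [hG (fun _ => ςstar) j rfl]; ring
    simp [this]
end
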